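/- arXiv:1902.02951 — 2 statements merged into one kernel-verified Lean document; each statement's English description precedes it below -/
import Mathlib

section
/- Let a ≥ 0, c > 0, and let u : [t0,ϑ] → [0,∞) be continuous and satisfy u(t) ≤ a + (c/Γ(α)) ∫_{t0}^{t} (t−τ)^{α−1} u(τ) dτ for all t ∈ [t0,ϑ]. Then u(t) ≤ a·E_α(c·(t−t0)^α) for all t ∈ [t0,ϑ], where E_α(z) = ∑_{k=0}^{∞} z^k / Γ(αk+1) is the Mittag-Leffler function. -/
open MeasureTheory Set
open scoped RealInnerProductSpace NNReal

noncomputable section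

/-- `ℝ^n`. -/
abbrev Evec (n : ℕ) := EuclideanSpace ℝ (Fin n)

/-- The Riemann–Liouville fractional integral of order `β` with basepoint `t0`:
`(I^β φ)(t) = (1/Γ(β)) ∫_{t0}^{t} (t-τ)^{β-1} φ(τ) dτ`. -/
def RL (t0 β : ℝ) {n : ℕ} (φ : ℝ → Evec n) (t : ℝ) : Evec n :=
  (1 / Real.Gamma β) • ∫ τ in t0..t, ((t - τ) ^ (β - 1)) • φ τ

/-- The Mittag-Leffler function `E_α(z) = ∑_{k} z^k / Γ(αk+1)`. -/
def ML (α z : ℝ) : ℝ := ∑' k : ℕ, z ^ k / Real.Gamma (α * k + 1)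

/-- The binomial coefficient `binom(β, i) = ∏_{j=0}^{i-1} (β-j)/(j+1)`. -/
def glCoef (β : ℝ) (i : ℕ) : ℝ := ∏ j ∈ Finset.range i, ((β - (j : ℝ)) / ((j : ℝ) + 1))

/-- The Grünwald–Letnikov fractional difference
`(Δ_h^{1-α} y)(t) = ∑_{i=0}^{⌊(t-t0)/h⌋} (-1)^i binom(1-α, i) y(t - i h)`. -/
def glDiff (t0 α h : ℝ) {n : ℕ} (y : ℝ → Evec n) (t : ℝ) : Evec n :=
  ∑ i ∈ Finset.range (⌊(t - t0) / h⌋₊ + 1),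
    ((-1 : ℝ) ^ i * glCoef (1 - α) i) • y (t - (i : ℝ) * h)

/-- The state `w0 + h^{α-1} (Δ_h^{1-α} y)(t)` of the original system reconstructed
from the state `y` of the approximating system. -/
def approxState (t0 α h : ℝ) {n : ℕ} (w0 : Evec n) (y : ℝ → Evec n) (t : ℝ) : Evec n :=
  w0 + (h ^ (α - 1)) • glDiff t0 α h y t

/-- Condition (A.1): `f` is continuous. -/
def CondA1 (t0 ϑ : ℝ) {n r s : ℕ} (U : Set (Evec r)) (V : Set (Evec s))
    (f : ℝ → Evec n → Evec r → Evec s → Evec n) : Prop :=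
  ContinuousOn (fun z : ℝ × Evec n × Evec r × Evec s => f z.1 z.2.1 z.2.2.1 z.2.2.2)
    ((Icc t0 ϑ) ×ˢ (univ : Set (Evec n)) ×ˢ U ×ˢ V)

/-- Condition (A.2): `f` is locally Lipschitz in the state variable, uniformly in the rest. -/
def CondA2 (t0 ϑ : ℝ) {n r s : ℕ} (U : Set (Evec r)) (V : Set (Evec s))
    (f : ℝ → Evec n → Evec r → Evec s → Evec n) : Prop :=
  ∀ R : ℝ, 0 ≤ R → ∃ lam > (0 : ℝ), ∀ t ∈ Icc t0 ϑ, ∀ x x' : Evec n, ‖x‖ ≤ R → ‖x'‖ ≤ R →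
    ∀ u ∈ U, ∀ v ∈ V, ‖f t x u v - f t x' u v‖ ≤ lam * ‖x - x'‖

/-- Condition (A.3): sublinear growth `‖f(t,x,u,v)‖ ≤ (1+‖x‖)c`. -/
def CondA3 (t0 ϑ : ℝ) {n r s : ℕ} (U : Set (Evec r)) (V : Set (Evec s))
    (f : ℝ → Evec n → Evec r → Evec s → Evec n) (c : ℝ) : Prop :=
  ∀ t ∈ Icc t0 ϑ, ∀ x : Evec n, ∀ u ∈ U, ∀ v ∈ V, ‖f t x u v‖ ≤ (1 + ‖x‖) * c

/-- Condition (A.4): the saddle point condition in a small game (Isaacs' condition). -/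
def CondA4 (t0 ϑ : ℝ) {n r s : ℕ} (U : Set (Evec r)) (V : Set (Evec s))
    (f : ℝ → Evec n → Evec r → Evec s → Evec n) : Prop :=
  ∀ t ∈ Icc t0 ϑ, ∀ x sv : Evec n,
    sInf ((fun u => sSup ((fun v => ⟪sv, f t x u v⟫) '' V)) '' U)
      = sSup ((fun v => sInf ((fun u => ⟪sv, f t x u v⟫) '' U)) '' V)

/-- Condition (A.5): `σ` depends only on the restriction of its argument to `[t0, ϑ]` and
is continuous with respect to the uniform norm on `C([t0,ϑ], ℝ^n)`. -/
def CondA5 (t0 ϑ : ℝ) {n : ℕ} (σ : (ℝ → Evec n) → ℝ) : Prop :=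
  (∀ x x' : ℝ → Evec n, (∀ t ∈ Icc t0 ϑ, x t = x' t) → σ x = σ x') ∧
  ∀ x : ℝ → Evec n, ContinuousOn x (Icc t0 ϑ) → ∀ ε > (0 : ℝ), ∃ δ > (0 : ℝ),
    ∀ x' : ℝ → Evec n, ContinuousOn x' (Icc t0 ϑ) →
      (∀ t ∈ Icc t0 ϑ, ‖x t - x' t‖ ≤ δ) → |σ x - σ x'| ≤ ε

/-- An admissible position `(t, w(·))` of the original fractional system, together with the
(Caputo-derivative) witness `φ`. -/
def IsAdmissible (t0 ϑ α c R0 : ℝ) {n : ℕ} (t : ℝ) (w φ : ℝ → Evec n) : Prop :=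
  t ∈ Icc t0 ϑ ∧ ContinuousOn w (Icc t0 t) ∧ ‖w t0‖ ≤ R0 ∧
  Measurable φ ∧ (∃ K : ℝ, ∀ᵐ τ ∂(volume.restrict (Icc t0 t)), ‖φ τ‖ ≤ K) ∧
  (∀ τ ∈ Icc t0 t, w τ = w t0 + RL t0 α φ τ) ∧
  (∀ᵐ τ ∂(volume.restrict (Icc t0 t)), ‖φ τ‖ ≤ (1 + ‖w τ‖) * c)

/-- An admissible control realization on `[tstar, ϑ]` with values in `U`. -/
def IsControl {m : ℕ} (tstar ϑ : ℝ) (U : Set (Evec m)) (u : ℝ → Evec m) : Prop :=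
  Measurable u ∧ ∀ t ∈ Icc tstar ϑ, u t ∈ U

/-- The motion of the original fractional system generated from the initial position
`(tstar, wstar(·))` (with Caputo derivative `φstar`) by control realizations `u`, `v`. -/
def IsMotion (t0 ϑ α : ℝ) {n r s : ℕ} (f : ℝ → Evec n → Evec r → Evec s → Evec n)
    (tstar : ℝ) (wstar φstar : ℝ → Evec n) (u : ℝ → Evec r) (v : ℝ → Evec s)
    (x : ℝ → Evec n) : Prop :=
  ContinuousOn x (Icc t0 ϑ) ∧
  (∀ t ∈ Icc t0 tstar, x t = wstar t) ∧
  (∀ t ∈ Icc tstar ϑ, x t = wstar t0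
    + (1 / Real.Gamma α) • (∫ τ in t0..tstar, ((t - τ) ^ (α - 1)) • φstar τ)
    + (1 / Real.Gamma α) • (∫ τ in tstar..t, ((t - τ) ^ (α - 1)) • f τ (x τ) (u τ) (v τ)))

/-- The motion of the approximating retarded-type system, with parameters `w0`, `h`,
generated from the initial position `(tstar, rstar(·))` by control realizations `p`, `q`. -/
def IsApproxMotion (t0 ϑ α : ℝ) {n r s : ℕ} (f : ℝ → Evec n → Evec r → Evec s → Evec n)
    (w0 : Evec n) (h : ℝ) (tstar : ℝ) (rstar : ℝ → Evec n)
    (p : ℝ → Evec r) (q : ℝ → Evec s) (y : ℝ → Evec n) : Prop :=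
  (∃ K : ℝ≥0, LipschitzOnWith K y (Icc t0 ϑ)) ∧
  (∀ t ∈ Icc t0 tstar, y t = rstar t) ∧
  (∀ᵐ t ∂(volume.restrict (Icc tstar ϑ)),
    HasDerivAt y (f t (approxState t0 α h w0 y t) (p t) (q t)) t)

/-- The initial position of the approximating system corresponding to an initial
position `(tstar, wstar(·))` of the original system:
`r*(t) = (I^{1-α}(w*(·) - w*(t0)))(t)`. -/
def rstarOf (t0 α : ℝ) {n : ℕ} (wstar : ℝ → Evec n) : ℝ → Evec n :=
  RL t0 (1 - α) (fun τ => wstar τ - wstar t0)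

/-- A non-anticipative strategy: a map from opponent control realizations (valued in `VO`)
to own control realizations (valued in `UO`) such that a.e. coincidence of inputs up to any
time implies a.e. coincidence of outputs up to that time. -/
def Nonanticipative {a b : ℕ} (tstar ϑ : ℝ) (UO : Set (Evec a)) (VO : Set (Evec b))
    (A : (ℝ → Evec b) → (ℝ → Evec a)) : Prop :=
  (∀ v, IsControl tstar ϑ VO v → IsControl tstar ϑ UO (A v)) ∧
  ∀ that ∈ Icc tstar ϑ, ∀ v v', IsControl tstar ϑ VO v → IsControl tstar ϑ VO v' →
    (∀ᵐ t ∂(volume.restrict (Icc tstar that)), v t = v' t) →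
    (∀ᵐ t ∂(volume.restrict (Icc tstar that)), A v t = A v' t)

/-- The lower value `Γ⁻(t*, w*(·)) = inf_A sup_{v(·)} σ(x(·))` of the original game. -/
def lowerValue (t0 ϑ α : ℝ) {n r s : ℕ} (U : Set (Evec r)) (V : Set (Evec s))
    (f : ℝ → Evec n → Evec r → Evec s → Evec n) (σ : (ℝ → Evec n) → ℝ)
    (tstar : ℝ) (wstar φstar : ℝ → Evec n) : ℝ :=
  sInf { a : ℝ | ∃ A : (ℝ → Evec s) → (ℝ → Evec r), Nonanticipative tstar ϑ U V A ∧
    a = sSup { g : ℝ | ∃ v x, IsControl tstar ϑ V v ∧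
      IsMotion t0 ϑ α f tstar wstar φstar (A v) v x ∧ g = σ x } }

/-- The upper value `Γ⁺(t*, w*(·)) = sup_B inf_{u(·)} σ(x(·))` of the original game. -/
def upperValue (t0 ϑ α : ℝ) {n r s : ℕ} (U : Set (Evec r)) (V : Set (Evec s))
    (f : ℝ → Evec n → Evec r → Evec s → Evec n) (σ : (ℝ → Evec n) → ℝ)
    (tstar : ℝ) (wstar φstar : ℝ → Evec n) : ℝ :=
  sSup { a : ℝ | ∃ B : (ℝ → Evec r) → (ℝ → Evec s), Nonanticipative tstar ϑ V U B ∧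
    a = sInf { g : ℝ | ∃ u x, IsControl tstar ϑ U u ∧
      IsMotion t0 ϑ α f tstar wstar φstar u (B u) x ∧ g = σ x } }

/-- The lower value of the approximating differential game with parameters `w0`, `h`,
from the initial position `(tstar, rstar(·))`. -/
def approxValue (t0 ϑ α : ℝ) {n r s : ℕ} (U : Set (Evec r)) (V : Set (Evec s))
    (f : ℝ → Evec n → Evec r → Evec s → Evec n) (σ : (ℝ → Evec n) → ℝ)
    (w0 : Evec n) (h : ℝ) (tstar : ℝ) (rstar : ℝ → Evec n) : ℝ :=
  sInf { a : ℝ | ∃ A : (ℝ → Evec s) → (ℝ → Evec r), Nonanticipative tstar ϑ U V A ∧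
    a = sSup { g : ℝ | ∃ q y, IsControl tstar ϑ V q ∧
      IsApproxMotion t0 ϑ α f w0 h tstar rstar (A q) q y ∧
      g = σ (approxState t0 α h w0 y) } }

/-- The upper value of the approximating differential game. -/
def approxUpperValue (t0 ϑ α : ℝ) {n r s : ℕ} (U : Set (Evec r)) (V : Set (Evec s))
    (f : ℝ → Evec n → Evec r → Evec s → Evec n) (σ : (ℝ → Evec n) → ℝ)
    (w0 : Evec n) (h : ℝ) (tstar : ℝ) (rstar : ℝ → Evec n) : ℝ :=
  sSup { a : ℝ | ∃ B : (ℝ → Evec r) → (ℝ → Evec s), Nonanticipative tstar ϑ V U B ∧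
    a = sInf { g : ℝ | ∃ p y, IsControl tstar ϑ U p ∧
      IsApproxMotion t0 ϑ α f w0 h tstar rstar p (B p) y ∧
      g = σ (approxState t0 α h w0 y) } }

/-- The value `Γ_h(t*, w*(·))` of the approximating game for an admissible position of the
original system. -/
def GammaH (t0 ϑ α : ℝ) {n r s : ℕ} (U : Set (Evec r)) (V : Set (Evec s))
    (f : ℝ → Evec n → Evec r → Evec s → Evec n) (σ : (ℝ → Evec n) → ℝ)
    (h : ℝ) (tstar : ℝ) (wstar : ℝ → Evec n) : ℝ :=
  approxValue t0 ϑ α U V f σ (wstar t0) h tstar (rstarOf t0 α wstar)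

/-- An admissible position `(t, rr(·)) ∈ G_h^0` of the approximating system, where
`ctilde` is the constant `c̃_h`. -/
def IsApproxAdmissiblePos (t0 ϑ : ℝ) (ctilde : ℝ) {n : ℕ} (t : ℝ) (rr : ℝ → Evec n) : Prop :=
  t ∈ Icc t0 ϑ ∧ rr t0 = 0 ∧ (∃ K : ℝ≥0, LipschitzOnWith K rr (Icc t0 t)) ∧
  ∀ᵐ τ ∂(volume.restrict (Icc t0 t)), ∀ d : Evec n, HasDerivAt rr d τ →
    ‖d‖ ≤ (1 + sSup ((fun ξ => ‖rr ξ‖) '' Icc t0 τ)) * ctilde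

/-- A partition `t* = τ_1 < τ_2 < … < τ_{k+1} = ϑ` of `[t*, ϑ]`. -/
def IsPartition (tstar ϑ : ℝ) (k : ℕ) (τ : ℕ → ℝ) : Prop :=
  1 ≤ k ∧ τ 1 = tstar ∧ τ (k + 1) = ϑ ∧ ∀ j : ℕ, 1 ≤ j → j ≤ k → τ j < τ (j + 1)

/-- `u0` attains `min_{u ∈ U} max_{v ∈ V} ⟨sv, f(t, x, u, v)⟩`. -/
def MinMaxPoint {n r s : ℕ} (U : Set (Evec r)) (V : Set (Evec s))
    (f : ℝ → Evec n → Evec r → Evec s → Evec n) (t : ℝ) (x sv : Evec n) (u0 : Evec r) : Prop :=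
  u0 ∈ U ∧ ∀ u ∈ U,
    sSup ((fun v => ⟪sv, f t x u0 v⟫) '' V) ≤ sSup ((fun v => ⟪sv, f t x u v⟫) '' V)

/-- `v0` attains `max_{v ∈ V} min_{u ∈ U} ⟨sv, f(t, x, u, v)⟩`. -/
def MaxMinPoint {n r s : ℕ} (U : Set (Evec r)) (V : Set (Evec s))
    (f : ℝ → Evec n → Evec r → Evec s → Evec n) (t : ℝ) (x sv : Evec n) (v0 : Evec s) : Prop :=
  v0 ∈ V ∧ ∀ v ∈ V,
    sInf ((fun u => ⟪sv, f t x u v⟫) '' U) ≤ sInf ((fun u => ⟪sv, f t x u v0⟫) '' U)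

/-- The first player's mutual aiming rule: on each step `[τ_j, τ_{j+1})`, with
`s_j = x(τ_j) - w0 - h^{α-1}(Δ_h^{1-α} y)(τ_j)`, the control `u` in the original system
attains the corresponding minimax and the control `q` in the guide attains the corresponding
maximin, both controls being constant on the step. -/
def FirstAiming (t0 α : ℝ) {n r s : ℕ} (U : Set (Evec r)) (V : Set (Evec s))
    (f : ℝ → Evec n → Evec r → Evec s → Evec n) (w0 : Evec n) (h : ℝ)
    (k : ℕ) (τ : ℕ → ℝ) (x y : ℝ → Evec n) (u : ℝ → Evec r) (q : ℝ → Evec s) : Prop :=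
  ∀ j : ℕ, 1 ≤ j → j ≤ k →
    MinMaxPoint U V f (τ j) (x (τ j))
      (x (τ j) - approxState t0 α h w0 y (τ j)) (u (τ j)) ∧
    MaxMinPoint U V f (τ j) (approxState t0 α h w0 y (τ j))
      (x (τ j) - approxState t0 α h w0 y (τ j)) (q (τ j)) ∧
    ∀ t ∈ Ico (τ j) (τ (j + 1)), u t = u (τ j) ∧ q t = q (τ j)

/-- The second player's mutual aiming rule: on each step `[τ_j, τ_{j+1})`, with
`s_j = w0 + h^{α-1}(Δ_h^{1-α} y)(τ_j) - x(τ_j)`, the control `v` in the original system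
attains the corresponding maximin and the control `p` in the guide attains the corresponding
minimax, both controls being constant on the step. -/
def SecondAiming (t0 α : ℝ) {n r s : ℕ} (U : Set (Evec r)) (V : Set (Evec s))
    (f : ℝ → Evec n → Evec r → Evec s → Evec n) (w0 : Evec n) (h : ℝ)
    (k : ℕ) (τ : ℕ → ℝ) (x y : ℝ → Evec n) (v : ℝ → Evec s) (p : ℝ → Evec r) : Prop :=
  ∀ j : ℕ, 1 ≤ j → j ≤ k →
    MaxMinPoint U V f (τ j) (x (τ j))
      (approxState t0 α h w0 y (τ j) - x (τ j)) (v (τ j)) ∧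
    MinMaxPoint U V f (τ j) (approxState t0 α h w0 y (τ j))
      (approxState t0 α h w0 y (τ j) - x (τ j)) (p (τ j)) ∧
    ∀ t ∈ Ico (τ j) (τ (j + 1)), v t = v (τ j) ∧ p t = p (τ j)

/-!
Iterate the inequality. The operator `K v (t) = (c / Γ(α)) ∫_{t0}^{t} (t - τ)^{α-1} v(τ) dτ` is
monotone, and by the Beta integral it sends `(c (t - t0)^α)^j / Γ(α j + 1)` to the next term
`(c (t - t0)^α)^{j+1} / Γ(α (j + 1) + 1)` of the Mittag-Leffler series. Starting from an upper bound
`M` of `u` on `[t0, ϑ]`, `k` iterations give `u ≤ a ∑_{j<k} (j-th term) + M (k-th term)`. The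
series converges by the ratio test, since log-convexity of `Γ` makes `Γ(x) / Γ(x + α)` decay like
`x^{-α}`; so the last term vanishes as `k → ∞`.
-/

open Filter Topology

def mlTerm (α z : ℝ) (k : ℕ) : ℝ := z ^ k / Real.Gamma (α * k + 1)

lemma mlTerm_zero (α z : ℝ) : mlTerm α z 0 = 1 := by
  simp [mlTerm]

-- Log-convexity of `Γ` at `x + 1 = α (x + α) + (1 - α) (x + α + 1)`.
lemma Gamma_add_one_le_Gamma_add_mul_rpow {α x : ℝ} (hα : 0 < α) (hα1 : α < 1) (hx : 0 < x) :
    Real.Gamma (x + 1) ≤ Real.Gamma (x + α) * (x + α) ^ (1 - α) := by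
  have hxα : 0 < x + α := by linarith
  have hΓ := Real.Gamma_pos_of_pos hxα
  have h := Real.Gamma_mul_add_mul_le_rpow_Gamma_mul_rpow_Gamma
    (a := α) (b := 1 - α) hxα (add_pos hxα one_pos) hα (by linarith) (by ring)
  rw [show α * (x + α) + (1 - α) * (x + α + 1) = x + 1 by ring,
    Real.Gamma_add_one hxα.ne', Real.mul_rpow hxα.le hΓ.le] at h
  calc Real.Gamma (x + 1)
      ≤ Real.Gamma (x + α) ^ α * ((x + α) ^ (1 - α) * Real.Gamma (x + α) ^ (1 - α)) := h
    _ = Real.Gamma (x + α) ^ (α + (1 - α)) * (x + α) ^ (1 - α) := by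
      rw [Real.rpow_add hΓ]; ring
    _ = Real.Gamma (x + α) * (x + α) ^ (1 - α) := by norm_num

lemma mlTerm_succ_le {α z : ℝ} (hα : 0 < α) (hα1 : α < 1) (hz : 0 ≤ z) (k : ℕ) :
    mlTerm α z (k + 1) ≤ 2 * z * (α * (k + 1) + 1) ^ (-α) * mlTerm α z k := by
  set x : ℝ := α * k + 1
  have hx : 1 ≤ x := by simp only [x]; nlinarith [(Nat.cast_nonneg k : (0 : ℝ) ≤ k)]
  have hxα : 0 < x + α := by linarith
  have hΓx := Real.Gamma_pos_of_pos (by linarith : 0 < x)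
  have hΓxα := Real.Gamma_pos_of_pos hxα
  have hy : α * ((k : ℝ) + 1) + 1 = x + α := by simp only [x]; ring
  have hgauss : x * Real.Gamma x ≤ Real.Gamma (x + α) * (x + α) ^ (1 - α) := by
    rw [← Real.Gamma_add_one (by linarith)]
    exact Gamma_add_one_le_Gamma_add_mul_rpow hα hα1 (by linarith)
  have hratio : Real.Gamma x ≤ 2 * (x + α) ^ (-α) * Real.Gamma (x + α) := by
    have hsplit : (x + α) ^ (1 - α) = (x + α) ^ (-α) * (x + α) := by
      rw [sub_eq_neg_add, Real.rpow_add hxα, Real.rpow_one]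
    have hpos : 0 < (x + α) ^ (-α) := Real.rpow_pos_of_pos hxα _
    rw [hsplit] at hgauss
    nlinarith
  rw [mlTerm, mlTerm, Nat.cast_succ, hy, div_le_iff₀ hΓxα, pow_succ]
  calc z ^ k * z = z ^ k * z / Real.Gamma x * Real.Gamma x := by field_simp
    _ ≤ z ^ k * z / Real.Gamma x * (2 * (x + α) ^ (-α) * Real.Gamma (x + α)) := by
      gcongr
    _ = 2 * z * (x + α) ^ (-α) * (z ^ k / Real.Gamma x) * Real.Gamma (x + α) := by ring

lemma summable_mlTerm {α z : ℝ} (hα : 0 < α) (hα1 : α < 1) (hz : 0 ≤ z) :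
    Summable (mlTerm α z) := by
  have hlim : Tendsto (fun k : ℕ => 2 * z * (α * ((k : ℝ) + 1) + 1) ^ (-α)) atTop (𝓝 0) := by
    have hy : Tendsto (fun k : ℕ => α * ((k : ℝ) + 1) + 1) atTop atTop :=
      tendsto_atTop_add_const_right _ _ <| (tendsto_natCast_atTop_atTop.atTop_add
        tendsto_const_nhds).const_mul_atTop hα
    simpa using ((tendsto_rpow_neg_atTop hα).comp hy).const_mul (2 * z)
  refine summable_of_ratio_norm_eventually_le (r := 1 / 2) (by norm_num) ?_
  filter_upwards [hlim.eventually (ge_mem_nhds (by norm_num : (0 : ℝ) < 1 / 2))] with k hk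
  have hnn : ∀ j, 0 ≤ mlTerm α z j := fun j =>
    div_nonneg (pow_nonneg hz j) (Real.Gamma_pos_of_pos (by positivity)).le
  rw [Real.norm_of_nonneg (hnn _), Real.norm_of_nonneg (hnn _)]
  exact (mlTerm_succ_le hα hα1 hz k).trans (mul_le_mul_of_nonneg_right hk (hnn k))

lemma integral_rpow_mul_one_sub_rpow {p q : ℝ} (hp : 0 < p) (hq : 0 < q) :
    ∫ x in (0 : ℝ)..1, x ^ (p - 1) * (1 - x) ^ (q - 1)
      = Real.Gamma p * Real.Gamma q / Real.Gamma (p + q) := by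
  have hB : Complex.betaIntegral p q
      = ((∫ x in (0 : ℝ)..1, x ^ (p - 1) * (1 - x) ^ (q - 1) : ℝ) : ℂ) := by
    rw [Complex.betaIntegral, ← intervalIntegral.integral_ofReal]
    refine intervalIntegral.integral_congr fun x hx => ?_
    rw [uIcc_of_le zero_le_one] at hx
    push_cast
    rw [Complex.ofReal_cpow hx.1, Complex.ofReal_cpow (by linarith [hx.2])]
    push_cast
    ring_nf
  have h := Complex.betaIntegral_eq_Gamma_mul_div p q (by simpa using hp) (by simpa using hq)
  rw [hB, ← Complex.ofReal_add, Complex.Gamma_ofReal, Complex.Gamma_ofReal,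
    Complex.Gamma_ofReal] at h
  exact_mod_cast h

lemma intervalIntegrable_sub_rpow_mul {t0 t p : ℝ} (hp : 0 < p) {g : ℝ → ℝ}
    (hg : ContinuousOn g (uIcc t0 t)) :
    IntervalIntegrable (fun τ => (t - τ) ^ (p - 1) * g τ) volume t0 t := by
  have h : IntervalIntegrable (fun x : ℝ => x ^ (p - 1)) volume (t - t0) (t - t) :=
    intervalIntegral.intervalIntegrable_rpow' (by linarith)
  exact (by simpa using h.comp_sub_left t : IntervalIntegrable _ volume t0 t).mul_continuousOn hg

lemma integral_sub_rpow_mul_sub_rpow {t0 t p q : ℝ} (ht : t0 < t) (hp : 0 < p) (hq : 0 < q) :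
    ∫ τ in t0..t, (t - τ) ^ (p - 1) * (τ - t0) ^ (q - 1)
      = (t - t0) ^ (p + q - 1) * (Real.Gamma p * Real.Gamma q / Real.Gamma (p + q)) := by
  set T := t - t0
  have hT : 0 < T := sub_pos.mpr ht
  have hsubst : ∫ τ in t0..t, (t - τ) ^ (p - 1) * (τ - t0) ^ (q - 1)
      = T * ∫ x in (0 : ℝ)..1, (T - T * x) ^ (p - 1) * (T * x) ^ (q - 1) := by
    have h := intervalIntegral.smul_integral_comp_add_mul (a := 0) (b := 1)
      (fun τ => (t - τ) ^ (p - 1) * (τ - t0) ^ (q - 1)) T t0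
    simp only [mul_zero, add_zero, mul_one, smul_eq_mul] at h
    rw [show t0 + T = t by ring] at h
    rw [← h]
    congr 1
    refine intervalIntegral.integral_congr fun x _ => ?_
    simp only [T]
    ring_nf
  have hscale : ∫ x in (0 : ℝ)..1, (T - T * x) ^ (p - 1) * (T * x) ^ (q - 1)
      = T ^ (p - 1) * T ^ (q - 1) * ∫ x in (0 : ℝ)..1, x ^ (q - 1) * (1 - x) ^ (p - 1) := by
    rw [← intervalIntegral.integral_const_mul]
    refine intervalIntegral.integral_congr fun x hx => ?_
    rw [uIcc_of_le zero_le_one] at hx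
    rw [show T - T * x = T * (1 - x) by ring, Real.mul_rpow hT.le (by linarith [hx.2]),
      Real.mul_rpow hT.le hx.1]
    ring
  have hpow : T * (T ^ (p - 1) * T ^ (q - 1)) = T ^ (p + q - 1) := by
    rw [← Real.rpow_add hT, mul_comm, ← Real.rpow_add_one hT.ne']
    ring_nf
  rw [hsubst, hscale, integral_rpow_mul_one_sub_rpow hq hp, ← hpow, add_comm q p]
  ring

lemma mlTerm_mul_rpow {α c s : ℝ} (hs : 0 ≤ s) (j : ℕ) :
    mlTerm α (c * s ^ α) j = c ^ j / Real.Gamma (α * j + 1) * s ^ (α * j + 1 - 1) := by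
  rw [mlTerm, mul_pow, ← Real.rpow_natCast (s ^ α), ← Real.rpow_mul hs, add_sub_cancel_right]
  ring

lemma integral_sub_rpow_mul_mlTerm {t0 t α : ℝ} (hα : 0 < α) (c : ℝ) (ht : t0 ≤ t) (j : ℕ) :
    c / Real.Gamma α * ∫ τ in t0..t, (t - τ) ^ (α - 1) * mlTerm α (c * (τ - t0) ^ α) j
      = mlTerm α (c * (t - t0) ^ α) (j + 1) := by
  rcases ht.eq_or_lt with rfl | ht
  · simp [mlTerm, Real.zero_rpow hα.ne']
  have hq : 0 < α * j + 1 := by positivity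
  have hintegrand : ∀ τ ∈ uIcc t0 t, (t - τ) ^ (α - 1) * mlTerm α (c * (τ - t0) ^ α) j
      = c ^ j / Real.Gamma (α * j + 1) * ((t - τ) ^ (α - 1) * (τ - t0) ^ (α * j + 1 - 1)) := by
    intro τ hτ
    rw [uIcc_of_le ht.le] at hτ
    rw [mlTerm_mul_rpow (sub_nonneg.mpr hτ.1)]
    ring
  rw [intervalIntegral.integral_congr hintegrand, intervalIntegral.integral_const_mul,
    integral_sub_rpow_mul_sub_rpow ht hα hq, mlTerm_mul_rpow (sub_nonneg.mpr ht.le),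
    show α + (α * j + 1) = α * ((j + 1 : ℕ) : ℝ) + 1 by push_cast; ring]
  field_simp
  ring

/-- The `k`-th Picard iterate of the Gronwall inequality started from the constant `M`. -/
def fracGronwallBound (α c t0 a M : ℝ) (k : ℕ) (t : ℝ) : ℝ :=
  a * ∑ j ∈ Finset.range k, mlTerm α (c * (t - t0) ^ α) j + M * mlTerm α (c * (t - t0) ^ α) k

lemma continuous_mlTerm_mul_sub_rpow {α : ℝ} (hα : 0 < α) (c t0 : ℝ) (j : ℕ) :
    Continuous fun τ => mlTerm α (c * (τ - t0) ^ α) j :=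
  ((continuous_const.mul ((continuous_id.sub continuous_const).rpow_const
    fun _ => Or.inr hα.le)).pow j).div_const _

lemma continuous_fracGronwallBound {α : ℝ} (hα : 0 < α) (c t0 a M : ℝ) (k : ℕ) :
    Continuous (fracGronwallBound α c t0 a M k) :=
  (continuous_const.mul (continuous_finsetSum _ fun j _ =>
    continuous_mlTerm_mul_sub_rpow hα c t0 j)).add
    (continuous_const.mul (continuous_mlTerm_mul_sub_rpow hα c t0 k))

lemma add_integral_fracGronwallBound {t0 t α : ℝ} (hα : 0 < α) (ht : t0 ≤ t) (c a M : ℝ)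
    (k : ℕ) :
    a + c / Real.Gamma α * ∫ τ in t0..t, (t - τ) ^ (α - 1) * fracGronwallBound α c t0 a M k τ
      = fracGronwallBound α c t0 a M (k + 1) t := by
  set φ : ℕ → ℝ → ℝ := fun j τ => (t - τ) ^ (α - 1) * mlTerm α (c * (τ - t0) ^ α) j
  have hφ : ∀ j, IntervalIntegrable (φ j) volume t0 t := fun j =>
    intervalIntegrable_sub_rpow_mul hα (continuous_mlTerm_mul_sub_rpow hα c t0 j).continuousOn
  have hsum : IntervalIntegrable
      (fun τ => (t - τ) ^ (α - 1) * (a * ∑ j ∈ Finset.range k, mlTerm α (c * (τ - t0) ^ α) j))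
      volume t0 t :=
    intervalIntegrable_sub_rpow_mul hα (continuous_const.mul (continuous_finsetSum _ fun j _ =>
      continuous_mlTerm_mul_sub_rpow hα c t0 j)).continuousOn
  have hlin : ∫ τ in t0..t, (t - τ) ^ (α - 1) * fracGronwallBound α c t0 a M k τ
      = a * (∑ j ∈ Finset.range k, ∫ τ in t0..t, φ j τ) + M * ∫ τ in t0..t, φ k τ := by
    simp only [fracGronwallBound, mul_add]
    have hk : IntervalIntegrable (fun τ => (t - τ) ^ (α - 1) * (M * mlTerm α (c * (τ - t0) ^ α) k))
        volume t0 t := by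
      simpa only [φ, mul_left_comm _ M] using (hφ k).const_mul M
    rw [intervalIntegral.integral_add hsum hk]
    simp only [mul_left_comm _ a, mul_left_comm _ M, intervalIntegral.integral_const_mul,
      Finset.mul_sum, φ]
    rw [intervalIntegral.integral_finsetSum fun j _ => (hφ j).const_mul a]
    simp only [intervalIntegral.integral_const_mul, φ]
  rw [hlin, mul_add, mul_left_comm (c / Real.Gamma α) a, mul_left_comm (c / Real.Gamma α) M,
    Finset.mul_sum]
  simp only [φ, integral_sub_rpow_mul_mlTerm hα c ht]
  rw [fracGronwallBound, Finset.sum_range_succ' _ k, mlTerm_zero]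
  ring

lemma le_fracGronwallBound {t0 ϑ α a c M : ℝ} {u : ℝ → ℝ} (hα : 0 < α) (hc : 0 ≤ c)
    (hu : ContinuousOn u (Icc t0 ϑ)) (hM : ∀ t ∈ Icc t0 ϑ, u t ≤ M)
    (hineq : ∀ t ∈ Icc t0 ϑ,
      u t ≤ a + (c / Real.Gamma α) * ∫ τ in t0..t, ((t - τ) ^ (α - 1)) * u τ) (k : ℕ) :
    ∀ t ∈ Icc t0 ϑ, u t ≤ fracGronwallBound α c t0 a M k t := by
  induction k with
  | zero =>
    intro t ht
    simpa [fracGronwallBound, mlTerm_zero] using hM t ht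
  | succ k ih =>
    intro t ht
    have hsub : Icc t0 t ⊆ Icc t0 ϑ := Icc_subset_Icc_right ht.2
    have hmono : ∫ τ in t0..t, (t - τ) ^ (α - 1) * u τ
        ≤ ∫ τ in t0..t, (t - τ) ^ (α - 1) * fracGronwallBound α c t0 a M k τ :=
      intervalIntegral.integral_mono_on ht.1
        (intervalIntegrable_sub_rpow_mul hα (hu.mono (uIcc_of_le ht.1 ▸ hsub)))
        (intervalIntegrable_sub_rpow_mul hα
          (continuous_fracGronwallBound hα c t0 a M k).continuousOn)
        fun τ hτ => mul_le_mul_of_nonneg_left (ih τ (hsub hτ))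
          (Real.rpow_nonneg (sub_nonneg.mpr hτ.2) _)
    have hcoef : 0 ≤ c / Real.Gamma α := div_nonneg hc (Real.Gamma_pos_of_pos hα).le
    calc u t ≤ a + c / Real.Gamma α * ∫ τ in t0..t, (t - τ) ^ (α - 1) * u τ := hineq t ht
      _ ≤ a + c / Real.Gamma α *
          ∫ τ in t0..t, (t - τ) ^ (α - 1) * fracGronwallBound α c t0 a M k τ := by gcongr
      _ = fracGronwallBound α c t0 a M (k + 1) t := add_integral_fracGronwallBound hα ht.1 c a M k

theorem fractional_gronwall_general
    (t0 ϑ : ℝ) (α : ℝ) (hα : α ∈ Set.Ioo (0 : ℝ) 1)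
    (a c : ℝ) (hc : 0 < c) (u : ℝ → ℝ)
    (hu : ContinuousOn u (Icc t0 ϑ))
    (hineq : ∀ t ∈ Icc t0 ϑ,
      u t ≤ a + (c / Real.Gamma α) * ∫ τ in t0..t, ((t - τ) ^ (α - 1)) * u τ) :
    ∀ t ∈ Icc t0 ϑ, u t ≤ a * ML α (c * (t - t0) ^ α) := by
  obtain ⟨M, hM⟩ := isCompact_Icc.bddAbove_image hu
  intro t ht
  have hz : 0 ≤ c * (t - t0) ^ α := mul_nonneg hc.le (Real.rpow_nonneg (sub_nonneg.mpr ht.1) _)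
  have hsum := summable_mlTerm hα.1 hα.2 hz
  have hlim : Tendsto (fun k => fracGronwallBound α c t0 a M k t) atTop
      (𝓝 (a * ML α (c * (t - t0) ^ α))) := by
    have h := (hsum.hasSum.tendsto_sum_nat.const_mul a).add (hsum.tendsto_atTop_zero.const_mul M)
    rwa [mul_zero, add_zero] at h
  exact ge_of_tendsto' hlim fun k =>
    le_fracGronwallBound hα.1 hc.le hu (fun τ hτ => hM ⟨τ, hτ, rfl⟩) hineq k t ht

/-- the fractional (Bellman–Gronwall) lemma: if a continuous nonnegative `u`
satisfies `u(t) ≤ a + (c/Γ(α)) ∫_{t0}^{t} (t-τ)^{α-1} u(τ) dτ` on `[t0,ϑ]`, then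
`u(t) ≤ a E_α(c (t-t0)^α)` on `[t0,ϑ]`. -/
theorem fractional_gronwall
    (t0 ϑ : ℝ) (hT : t0 < ϑ) (α : ℝ) (hα : α ∈ Set.Ioo (0 : ℝ) 1)
    (a c : ℝ) (ha : 0 ≤ a) (hc : 0 < c) (u : ℝ → ℝ)
    (hu : ContinuousOn u (Icc t0 ϑ)) (hnn : ∀ t ∈ Icc t0 ϑ, 0 ≤ u t)
    (hineq : ∀ t ∈ Icc t0 ϑ,
      u t ≤ a + (c / Real.Gamma α) * ∫ τ in t0..t, ((t - τ) ^ (α - 1)) * u τ) :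
    ∀ t ∈ Icc t0 ϑ, u t ≤ a * ML α (c * (t - t0) ^ α) :=
  fractional_gronwall_general t0 ϑ α hα a c hc u hu hineq

end
end

section
/- Assume (A.1)–(A.3). There exist constants R1 > 0 and H1 > 0, depending only on α, t0, ϑ, R0 and c, such that every motion x generated from any admissible position (t*, w*(·)) by any measurable control realizations u : [t*,ϑ] → U and v : [t*,ϑ] → V satisfies ‖x(t)‖ ≤ R1 and ‖x(t) − x(t′)‖ ≤ H1·|t − t′|^α for all t, t′ ∈ [t0,ϑ]. -/
open MeasureTheory Set
open scoped RealInnerProductSpace NNReal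

noncomputable section

/-!
Gluing the Caputo derivative of the initial history to the right-hand side along the motion
gives one function `g` with `x = x(t0) + I^α g` on all of `[t0, ϑ]` and
`‖g‖ ≤ (1 + ‖x‖) c` almost everywhere. Hence `‖x‖` satisfies a weakly singular Volterra
inequality. On a step of length `δ` with `c δ^α / Γ(α + 1) = 1/2`, the contribution of the
step to the bound at a maximum point is at most half that maximum and can be absorbed, so the
bound grows geometrically over the `⌈(ϑ - t0)/δ⌉` steps. Once `g` is bounded, `I^α g` is
Hölder continuous of order `α`.
-/

section Kernel

variable {α : ℝ}

theorem intervalIntegrable_sub_rpow (hα : 0 < α) (t a b : ℝ) :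
    IntervalIntegrable (fun τ => (t - τ) ^ (α - 1)) volume a b := by
  simpa using (intervalIntegral.intervalIntegrable_rpow' (r := α - 1) (by linarith)
    (a := t - a) (b := t - b)).comp_sub_left t

theorem integral_sub_rpow (hα : 0 < α) (t a b : ℝ) :
    ∫ τ in a..b, (t - τ) ^ (α - 1) = ((t - a) ^ α - (t - b) ^ α) / α := by
  rw [intervalIntegral.integral_comp_sub_left (fun x : ℝ => x ^ (α - 1)) t,
    integral_rpow (Or.inl (by linarith)), sub_add_cancel]

theorem integral_sub_rpow_mul_le (hα : 0 < α) {y : ℝ → ℝ} {a b t B : ℝ} (hab : a ≤ b)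
    (hbt : b ≤ t) (hy : ContinuousOn y (Icc a b)) (hB : ∀ τ ∈ Icc a b, y τ ≤ B) :
    ∫ τ in a..b, (t - τ) ^ (α - 1) * y τ ≤ B * (((t - a) ^ α - (t - b) ^ α) / α) := by
  have hk := intervalIntegrable_sub_rpow hα t a b
  rw [← integral_sub_rpow hα, ← intervalIntegral.integral_const_mul]
  refine intervalIntegral.integral_mono_on hab (hk.mul_continuousOn (by rwa [uIcc_of_le hab]))
    (hk.const_mul B) fun τ hτ => ?_
  rw [mul_comm B]
  exact mul_le_mul_of_nonneg_left (hB τ hτ) (Real.rpow_nonneg (by linarith [hτ.2]) _)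

end Kernel

section FractionalGronwall

variable {α C R0 t0 ϑ : ℝ} {y : ℝ → ℝ}

theorem fractional_volterra_le_split (hα : 0 < α) (hC : 0 ≤ C)
    (hy_cont : ContinuousOn y (Icc t0 ϑ))
    (hy : ∀ t ∈ Icc t0 ϑ, y t ≤ R0 + C * ∫ τ in t0..t, (t - τ) ^ (α - 1) * (1 + y τ))
    {s t A : ℝ} (hs : t0 ≤ s) (hst : s ≤ t) (htϑ : t ≤ ϑ)
    (hA : ∀ τ ∈ Icc t0 s, y τ ≤ A) (hmax : ∀ τ ∈ Icc s t, y τ ≤ y t) :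
    y t ≤ R0 + C * ((1 + A) * (((t - t0) ^ α - (t - s) ^ α) / α)
      + (1 + y t) * ((t - s) ^ α / α)) := by
  have hcont : ∀ a b, t0 ≤ a → b ≤ t → ContinuousOn (fun τ => 1 + y τ) (Icc a b) :=
    fun a b ha hb => continuousOn_const.add (hy_cont.mono (Icc_subset_Icc ha (hb.trans htϑ)))
  have hint : ∀ a b, t0 ≤ a → a ≤ b → b ≤ t →
      IntervalIntegrable (fun τ => (t - τ) ^ (α - 1) * (1 + y τ)) volume a b :=
    fun a b ha hab hb => (intervalIntegrable_sub_rpow hα t a b).mul_continuousOn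
      (by rw [uIcc_of_le hab]; exact hcont a b ha hb)
  have hpast := integral_sub_rpow_mul_le hα (t := t) hs hst (hcont t0 s le_rfl hst)
    fun τ hτ => add_le_add_right (hA τ hτ) 1
  have hlast := integral_sub_rpow_mul_le hα (t := t) hst le_rfl (hcont s t hs le_rfl)
    fun τ hτ => add_le_add_right (hmax τ hτ) 1
  rw [sub_self, Real.zero_rpow hα.ne', sub_zero] at hlast
  calc y t ≤ R0 + C * ∫ τ in t0..t, (t - τ) ^ (α - 1) * (1 + y τ) :=
        hy t ⟨hs.trans hst, htϑ⟩
    _ = R0 + C * ((∫ τ in t0..s, (t - τ) ^ (α - 1) * (1 + y τ))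
          + ∫ τ in s..t, (t - τ) ^ (α - 1) * (1 + y τ)) := by
        rw [intervalIntegral.integral_add_adjacent_intervals (hint t0 s le_rfl hs hst)
          (hint s t hs hst le_rfl)]
    _ ≤ _ := by gcongr

theorem fractional_volterra_step (hα : 0 < α) (hC : 0 ≤ C) (hy_cont : ContinuousOn y (Icc t0 ϑ))
    (hy_nonneg : ∀ t ∈ Icc t0 ϑ, 0 ≤ y t)
    (hy : ∀ t ∈ Icc t0 ϑ, y t ≤ R0 + C * ∫ τ in t0..t, (t - τ) ^ (α - 1) * (1 + y τ))
    {δ s A A' : ℝ} (hδ : C * (δ ^ α / α) ≤ 1 / 2) (hs : t0 ≤ s)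
    (hA : ∀ t ∈ Icc t0 ϑ, t ≤ s → y t ≤ A) (hAA' : A ≤ A')
    (hA' : 2 * R0 + 1 + 2 * (C * ((ϑ - t0) ^ α / α)) * (1 + A) ≤ A') :
    ∀ t ∈ Icc t0 ϑ, t ≤ s + δ → y t ≤ A' := by
  intro t ht hle
  have hb : t0 ≤ min (s + δ) ϑ := le_min (by linarith [ht.1]) (ht.1.trans ht.2)
  obtain ⟨th, hth, hmax⟩ := isCompact_Icc.exists_isMaxOn (nonempty_Icc.2 hb)
    (hy_cont.mono (Icc_subset_Icc le_rfl (min_le_right _ _)))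
  have hth_max : ∀ τ ∈ Icc t0 (min (s + δ) ϑ), y τ ≤ y th := fun τ hτ => hmax hτ
  have hthϑ : th ≤ ϑ := hth.2.trans (min_le_right _ _)
  have hths : th ≤ s + δ := hth.2.trans (min_le_left _ _)
  refine (hth_max t ⟨ht.1, le_min hle ht.2⟩).trans ?_
  rcases le_or_gt th s with hth_s | hs_th
  · exact (hA th ⟨hth.1, hthϑ⟩ hth_s).trans hAA'
  have hA0 : 0 ≤ 1 + A := by
    linarith [hy_nonneg t0 ⟨le_rfl, hs.trans (hs_th.le.trans hthϑ)⟩,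
      hA t0 ⟨le_rfl, hs.trans (hs_th.le.trans hthϑ)⟩ hs]
  have hrec := fractional_volterra_le_split hα hC hy_cont hy hs hs_th.le hthϑ
    (fun τ hτ => hA τ ⟨hτ.1, hτ.2.trans (hs_th.le.trans hthϑ)⟩ hτ.2)
    (fun τ hτ => hth_max τ ⟨hs.trans hτ.1, hτ.2.trans hth.2⟩)
  have hpast : C * ((1 + A) * (((th - t0) ^ α - (th - s) ^ α) / α))
      ≤ (1 + A) * (C * ((ϑ - t0) ^ α / α)) := by
    have h1 : (th - t0) ^ α ≤ (ϑ - t0) ^ α := Real.rpow_le_rpow (by linarith) (by linarith) hα.le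
    have h2 : 0 ≤ (th - s) ^ α := Real.rpow_nonneg (by linarith) α
    rw [mul_left_comm]
    gcongr
    linarith
  have hlast : C * ((1 + y th) * ((th - s) ^ α / α)) ≤ (1 + y th) / 2 := by
    have := hy_nonneg th ⟨hth.1, hthϑ⟩
    calc _ = (1 + y th) * (C * ((th - s) ^ α / α)) := by ring
      _ ≤ (1 + y th) * (C * (δ ^ α / α)) := by
        gcongr (1 + y th) * (C * (?_ / α))
        exact Real.rpow_le_rpow (by linarith) (by linarith) hα.le
      _ ≤ _ := by linarith [mul_le_mul_of_nonneg_left hδ (by linarith : (0 : ℝ) ≤ 1 + y th)]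
  rw [mul_add] at hrec
  linarith

theorem exists_bound_of_fractional_volterra (hα : 0 < α) (hC : 0 < C) (hR0 : 0 ≤ R0)
    (hϑ : t0 ≤ ϑ) :
    ∃ R1 > 0, ∀ y : ℝ → ℝ, ContinuousOn y (Icc t0 ϑ) → (∀ t ∈ Icc t0 ϑ, 0 ≤ y t) →
      (∀ t ∈ Icc t0 ϑ, y t ≤ R0 + C * ∫ τ in t0..t, (t - τ) ^ (α - 1) * (1 + y τ)) →
      ∀ t ∈ Icc t0 ϑ, y t ≤ R1 := by
  set δ := (α / (2 * C)) ^ α⁻¹ with hδ_def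
  have hδ : 0 < δ := by positivity
  have hCδ : C * (δ ^ α / α) = 1 / 2 := by
    rw [hδ_def, ← Real.rpow_mul (by positivity), inv_mul_cancel₀ hα.ne', Real.rpow_one]
    field_simp
  set q := 1 + 2 * (C * ((ϑ - t0) ^ α / α)) with hq_def
  have hq : 1 ≤ q := by
    have := Real.rpow_nonneg (sub_nonneg.2 hϑ) α
    have : 0 ≤ C * ((ϑ - t0) ^ α / α) := by positivity
    linarith
  set K := ⌈(ϑ - t0) / δ⌉₊
  refine ⟨2 * (R0 + 1) * q ^ K - 1, ?_, fun y hy_cont hy_nonneg hy => ?_⟩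
  · nlinarith [one_le_pow₀ (n := K) hq]
  have hq_sub : 2 * (C * ((ϑ - t0) ^ α / α)) = q - 1 := by rw [hq_def]; ring
  -- `2 (R0 + 1) q ^ k - 1` dominates the `k`-th iterate from `R0` of the step map
  -- `A ↦ 2 R0 + 1 + (q - 1) (1 + A)` of `fractional_volterra_step`.
  have hbound : ∀ k : ℕ, ∀ t ∈ Icc t0 ϑ, t ≤ t0 + k * δ → y t ≤ 2 * (R0 + 1) * q ^ k - 1 := by
    intro k
    induction k with
    | zero =>
      intro t ht hle
      obtain rfl : t = t0 := le_antisymm (by simpa using hle) ht.1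
      have := hy t ht
      simp only [intervalIntegral.integral_same, mul_zero, add_zero] at this
      linarith
    | succ k ih =>
      have hqk : 2 * (R0 + 1) ≤ 2 * (R0 + 1) * q ^ k :=
        le_mul_of_one_le_right (by positivity) (one_le_pow₀ hq)
      have hstep := fractional_volterra_step hα hC.le hy_cont hy_nonneg hy hCδ.le
        (le_add_of_nonneg_right (by positivity)) ih
        (A' := 2 * (R0 + 1) * q ^ (k + 1) - 1)
        (by gcongr 2 * (R0 + 1) * ?_ - 1; exact pow_le_pow_right₀ hq k.le_succ)
        (by rw [hq_sub, pow_succ]; linarith)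
      intro t ht hle
      exact hstep t ht (by push_cast at hle; linarith)
  intro t ht
  refine hbound K t ht ?_
  have : ϑ - t0 ≤ K * δ := (div_le_iff₀ hδ).1 (Nat.le_ceil _)
  linarith [ht.2]

end FractionalGronwall

section RiemannLiouville

variable {n : ℕ} {α t0 ϑ B : ℝ} {g : ℝ → Evec n}

theorem intervalIntegrable_sub_rpow_smul (hα : 0 < α)
    (hg : AEStronglyMeasurable g (volume.restrict (Icc t0 ϑ)))
    (hB : ∀ᵐ τ ∂(volume.restrict (Icc t0 ϑ)), ‖g τ‖ ≤ B) (t : ℝ) {a b : ℝ}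
    (ha : a ∈ Icc t0 ϑ) (hb : b ∈ Icc t0 ϑ) :
    IntervalIntegrable (fun τ => (t - τ) ^ (α - 1) • g τ) volume a b := by
  have hsub : uIoc a b ⊆ Icc t0 ϑ := uIoc_subset_uIcc.trans (uIcc_subset_Icc ha hb)
  exact intervalIntegrable_iff.2 ((intervalIntegrable_sub_rpow hα t a b).def'.smul_bdd B
    (hg.mono_measure (Measure.restrict_mono hsub le_rfl))
    (ae_restrict_of_ae_restrict_of_subset hsub hB))

theorem norm_RL_le (hα : 0 < α) {h : ℝ → ℝ} {t : ℝ} (ht : t0 ≤ t)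
    (hh : ContinuousOn h (Icc t0 t)) (hgh : ∀ᵐ τ ∂(volume.restrict (Icc t0 t)), ‖g τ‖ ≤ h τ) :
    ‖RL t0 α g t‖ ≤ 1 / Real.Gamma α * ∫ τ in t0..t, (t - τ) ^ (α - 1) * h τ := by
  have hΓ := Real.Gamma_pos_of_pos hα
  rw [RL, norm_smul, Real.norm_of_nonneg (by positivity)]
  gcongr
  refine intervalIntegral.norm_integral_le_of_norm_le ht ?_
    ((intervalIntegrable_sub_rpow hα t t0 t).mul_continuousOn (by rwa [uIcc_of_le ht]))
  filter_upwards [(ae_restrict_iff' measurableSet_Icc).1 hgh] with τ hτ hmem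
  rw [norm_smul, Real.norm_of_nonneg (Real.rpow_nonneg (by linarith [hmem.2]) _)]
  exact mul_le_mul_of_nonneg_left (hτ (Ioc_subset_Icc_self hmem))
    (Real.rpow_nonneg (by linarith [hmem.2]) _)

theorem norm_le_fractional_volterra (hα : 0 < α) {x : ℝ → Evec n} {t R0 c : ℝ} (ht : t0 ≤ t)
    (hx : ContinuousOn x (Icc t0 t)) (hrep : x t = x t0 + RL t0 α g t) (hx0 : ‖x t0‖ ≤ R0)
    (hg : ∀ᵐ τ ∂(volume.restrict (Icc t0 t)), ‖g τ‖ ≤ (1 + ‖x τ‖) * c) :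
    ‖x t‖ ≤ R0 + c / Real.Gamma α * ∫ τ in t0..t, (t - τ) ^ (α - 1) * (1 + ‖x τ‖) := by
  have hRL := norm_RL_le hα ht (h := fun τ => (1 + ‖x τ‖) * c)
    ((continuousOn_const.add (continuous_norm.comp_continuousOn hx)).mul continuousOn_const) hg
  rw [hrep]
  refine (norm_add_le _ _).trans (add_le_add hx0 (hRL.trans_eq ?_))
  simp_rw [← mul_assoc, intervalIntegral.integral_mul_const]
  ring

theorem norm_integral_sub_rpow_smul_le (hα : 0 < α) {a b t : ℝ} (hab : a ≤ b) (hbt : b ≤ t)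
    (hB : ∀ᵐ τ, τ ∈ Ioc a b → ‖g τ‖ ≤ B) :
    ‖∫ τ in a..b, (t - τ) ^ (α - 1) • g τ‖ ≤ B * (((t - a) ^ α - (t - b) ^ α) / α) := by
  refine (intervalIntegral.norm_integral_le_of_norm_le hab ?_
    ((intervalIntegrable_sub_rpow hα t a b).mul_const B)).trans_eq ?_
  · filter_upwards [hB] with τ hτ hmem
    have hk := Real.rpow_nonneg (by linarith [hmem.2] : 0 ≤ t - τ) (α - 1)
    rw [norm_smul, Real.norm_of_nonneg hk]
    exact mul_le_mul_of_nonneg_left (hτ hmem) hk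
  · rw [intervalIntegral.integral_mul_const, integral_sub_rpow hα, mul_comm]

theorem norm_integral_sub_rpow_sub_smul_le (hα : 0 < α) (hα1 : α ≤ 1) (hB0 : 0 ≤ B)
    {t t' : ℝ} (ht' : t0 ≤ t') (htt : t' ≤ t) (hB : ∀ᵐ τ, τ ∈ Ioc t0 t' → ‖g τ‖ ≤ B) :
    ‖∫ τ in t0..t', ((t - τ) ^ (α - 1) - (t' - τ) ^ (α - 1)) • g τ‖
      ≤ B * ((t - t') ^ α / α) := by
  have hk := intervalIntegrable_sub_rpow hα t t0 t'
  have hk' := intervalIntegrable_sub_rpow hα t' t0 t'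
  refine (intervalIntegral.norm_integral_le_of_norm_le ht' ?_
    ((hk'.sub hk).mul_const B)).trans ?_
  · filter_upwards [hB, Measure.ae_ne volume t'] with τ hτ hτt' hmem
    have hmono : (t - τ) ^ (α - 1) ≤ (t' - τ) ^ (α - 1) :=
      Real.rpow_le_rpow_of_nonpos (by linarith [lt_of_le_of_ne hmem.2 hτt']) (by linarith)
        (by linarith)
    rw [norm_smul, Real.norm_eq_abs, abs_of_nonpos (by linarith), neg_sub]
    exact mul_le_mul_of_nonneg_left (hτ hmem) (by linarith)
  · rw [intervalIntegral.integral_mul_const, intervalIntegral.integral_sub hk' hk,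
      integral_sub_rpow hα, integral_sub_rpow hα, sub_self, Real.zero_rpow hα.ne', sub_zero,
      ← sub_div, mul_comm]
    have : (t' - t0) ^ α ≤ (t - t0) ^ α := Real.rpow_le_rpow (by linarith) (by linarith) hα.le
    gcongr
    linarith

theorem norm_RL_sub_RL_le (hα : 0 < α) (hα1 : α ≤ 1)
    (hg : AEStronglyMeasurable g (volume.restrict (Icc t0 ϑ))) (hB0 : 0 ≤ B)
    (hB : ∀ᵐ τ ∂(volume.restrict (Icc t0 ϑ)), ‖g τ‖ ≤ B) {t t' : ℝ}
    (ht : t ∈ Icc t0 ϑ) (ht' : t' ∈ Icc t0 ϑ) :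
    ‖RL t0 α g t - RL t0 α g t'‖ ≤ 2 * B / (α * Real.Gamma α) * |t - t'| ^ α := by
  wlog htt : t' ≤ t generalizing t t'
  · rw [norm_sub_rev, abs_sub_comm]
    exact this ht' ht (le_of_not_ge htt)
  have hΓ := Real.Gamma_pos_of_pos hα
  have hint := intervalIntegrable_sub_rpow_smul hα hg hB
  have ht0 : t0 ∈ Icc t0 ϑ := ⟨le_rfl, ht.1.trans ht.2⟩
  have hBae : ∀ a b, t0 ≤ a → b ≤ ϑ → ∀ᵐ τ, τ ∈ Ioc a b → ‖g τ‖ ≤ B := fun a b ha hb => by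
    filter_upwards [(ae_restrict_iff' measurableSet_Icc).1 hB] with τ hτ hmem
    exact hτ ⟨ha.trans hmem.1.le, hmem.2.trans hb⟩
  have hdiff : RL t0 α g t - RL t0 α g t' = (1 / Real.Gamma α) •
      ((∫ τ in t0..t', ((t - τ) ^ (α - 1) - (t' - τ) ^ (α - 1)) • g τ)
        + ∫ τ in t'..t, (t - τ) ^ (α - 1) • g τ) := by
    simp_rw [RL, sub_smul]
    rw [← intervalIntegral.integral_add_adjacent_intervals (hint t ht0 ht') (hint t ht' ht),
      intervalIntegral.integral_sub (hint t ht0 ht') (hint t' ht0 ht')]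
    module
  have hhistory := norm_integral_sub_rpow_sub_smul_le hα hα1 hB0 ht'.1 htt
    (hBae t0 t' le_rfl ht'.2)
  have hrecent := norm_integral_sub_rpow_smul_le hα htt le_rfl (hBae t' t ht'.1 ht.2)
  rw [sub_self, Real.zero_rpow hα.ne', sub_zero] at hrecent
  rw [hdiff, norm_smul, Real.norm_of_nonneg (by positivity), abs_of_nonneg (by linarith)]
  calc 1 / Real.Gamma α * ‖_ + _‖
      ≤ 1 / Real.Gamma α * (B * ((t - t') ^ α / α) + B * ((t - t') ^ α / α)) := by
        gcongr
        exact (norm_add_le _ _).trans (add_le_add hhistory hrecent)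
    _ = _ := by field_simp; ring

end RiemannLiouville

theorem ContinuousOn.comp_aemeasurable_of_ae_mem {β γ : Type*} [MeasurableSpace β]
    [TopologicalSpace β] [OpensMeasurableSpace β] [MeasurableSpace γ] [TopologicalSpace γ]
    [BorelSpace γ] {δ : Type*} [MeasurableSpace δ] {μ : Measure δ} {F : β → γ} {S : Set β}
    {p : δ → β} (hF : ContinuousOn F S) (hS : MeasurableSet S) (hp : AEMeasurable p μ)
    (hmem : ∀ᵐ τ ∂μ, p τ ∈ S) : AEMeasurable (fun τ => F (p τ)) μ := by
  have hmap : (μ.map p).restrict S = μ.map p :=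
    Measure.restrict_eq_self_of_ae_mem ((mem_ae_map_iff hp hS).2 hmem)
  exact (hmap ▸ hF.aemeasurable hS : AEMeasurable F (μ.map p)).comp_aemeasurable hp

section Motion

variable {t0 ϑ α c R0 B tstar : ℝ} {n r s : ℕ} {U : Set (Evec r)} {V : Set (Evec s)}
  {f : ℝ → Evec n → Evec r → Evec s → Evec n} {wstar φstar x : ℝ → Evec n}
  {u : ℝ → Evec r} {v : ℝ → Evec s}

def motionCaputoDeriv (f : ℝ → Evec n → Evec r → Evec s → Evec n) (tstar : ℝ)
    (φstar : ℝ → Evec n) (u : ℝ → Evec r) (v : ℝ → Evec s) (x : ℝ → Evec n) : ℝ → Evec n :=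
  (Iio tstar).piecewise φstar fun τ => f τ (x τ) (u τ) (v τ)

theorem motionCaputoDeriv_of_lt {τ : ℝ} (hτ : τ < tstar) :
    motionCaputoDeriv f tstar φstar u v x τ = φstar τ :=
  piecewise_eq_of_mem (Iio tstar) _ _ hτ

theorem motionCaputoDeriv_of_le {τ : ℝ} (hτ : tstar ≤ τ) :
    motionCaputoDeriv f tstar φstar u v x τ = f τ (x τ) (u τ) (v τ) :=
  piecewise_eq_of_notMem (Iio tstar) _ _ (not_lt.2 hτ)

theorem aestronglyMeasurable_motionCaputoDeriv (hA1 : CondA1 t0 ϑ U V f) (hU : IsClosed U)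
    (hV : IsClosed V) (hφ : Measurable φstar) (hu : IsControl tstar ϑ U u)
    (hv : IsControl tstar ϑ V v) (hx : ContinuousOn x (Icc t0 ϑ)) :
    AEStronglyMeasurable (motionCaputoDeriv f tstar φstar u v x) (volume.restrict (Icc t0 ϑ)) := by
  refine hφ.aestronglyMeasurable.piecewise measurableSet_Iio ?_
  rw [Measure.restrict_restrict measurableSet_Iio.compl, compl_Iio]
  have hsub : Ici tstar ∩ Icc t0 ϑ ⊆ Icc t0 ϑ := inter_subset_right
  refine (ContinuousOn.comp_aemeasurable_of_ae_mem hA1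
    (measurableSet_Icc.prod (MeasurableSet.univ.prod
      (hU.measurableSet.prod hV.measurableSet)))
    (aemeasurable_id.prodMk ((hx.aemeasurable measurableSet_Icc).mono_measure
      (Measure.restrict_mono hsub le_rfl) |>.prodMk
        (hu.1.aemeasurable.prodMk hv.1.aemeasurable))) ?_).aestronglyMeasurable
  filter_upwards [ae_restrict_mem (measurableSet_Ici.inter measurableSet_Icc)] with τ hτ
  exact ⟨hτ.2, mem_univ _, hu.2 τ ⟨hτ.1, hτ.2.2⟩, hv.2 τ ⟨hτ.1, hτ.2.2⟩⟩

theorem ae_norm_motionCaputoDeriv_le (hA3 : CondA3 t0 ϑ U V f c)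
    (hadm : IsAdmissible t0 ϑ α c R0 tstar wstar φstar) (hu : IsControl tstar ϑ U u)
    (hv : IsControl tstar ϑ V v) (hmot : IsMotion t0 ϑ α f tstar wstar φstar u v x) :
    ∀ᵐ τ ∂(volume.restrict (Icc t0 ϑ)),
      ‖motionCaputoDeriv f tstar φstar u v x τ‖ ≤ (1 + ‖x τ‖) * c := by
  have hφ := (ae_restrict_iff' measurableSet_Icc).1 hadm.2.2.2.2.2.2
  rw [ae_restrict_iff' measurableSet_Icc]
  filter_upwards [hφ] with τ hτφ hτ
  by_cases hlt : τ < tstar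
  · rw [motionCaputoDeriv_of_lt hlt, hmot.2.1 τ ⟨hτ.1, hlt.le⟩]
    exact hτφ ⟨hτ.1, hlt.le⟩
  · have hmem : τ ∈ Icc tstar ϑ := ⟨not_lt.1 hlt, hτ.2⟩
    rw [motionCaputoDeriv_of_le hmem.1]
    exact hA3 τ hτ _ _ (hu.2 τ hmem) _ (hv.2 τ hmem)

theorem IsMotion.eq_add_RL (hmot : IsMotion t0 ϑ α f tstar wstar φstar u v x)
    (hadm : IsAdmissible t0 ϑ α c R0 tstar wstar φstar) (hα : 0 < α)
    (hg : AEStronglyMeasurable (motionCaputoDeriv f tstar φstar u v x)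
      (volume.restrict (Icc t0 ϑ)))
    (hB : ∀ᵐ τ ∂(volume.restrict (Icc t0 ϑ)), ‖motionCaputoDeriv f tstar φstar u v x τ‖ ≤ B)
    {t : ℝ} (ht : t ∈ Icc t0 ϑ) :
    x t = x t0 + RL t0 α (motionCaputoDeriv f tstar φstar u v x) t := by
  have hts := hadm.1
  have hx0 : x t0 = wstar t0 := hmot.2.1 t0 ⟨le_rfl, hts.1⟩
  have hhistory : ∀ b ≤ tstar, ∫ τ in t0..b, (t - τ) ^ (α - 1) • φstar τ
      = ∫ τ in t0..b, (t - τ) ^ (α - 1) • motionCaputoDeriv f tstar φstar u v x τ := fun b hb => by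
    refine intervalIntegral.integral_congr_ae ?_
    filter_upwards [Measure.ae_ne volume tstar] with τ hne hτ
    rw [motionCaputoDeriv_of_lt (lt_of_le_of_ne (hτ.2.trans (max_le hts.1 hb)) hne)]
  rcases le_or_gt t tstar with hle | hgt
  · rw [hmot.2.1 t ⟨ht.1, hle⟩, hadm.2.2.2.2.2.1 t ⟨ht.1, hle⟩, hx0, RL, RL, hhistory t hle]
  have hrecent : ∫ τ in tstar..t, (t - τ) ^ (α - 1) • f τ (x τ) (u τ) (v τ)
      = ∫ τ in tstar..t, (t - τ) ^ (α - 1) • motionCaputoDeriv f tstar φstar u v x τ := by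
    refine intervalIntegral.integral_congr fun τ hτ => ?_
    rw [uIcc_of_le hgt.le] at hτ
    rw [motionCaputoDeriv_of_le hτ.1]
  have ht0 : t0 ∈ Icc t0 ϑ := ⟨le_rfl, hts.1.trans hts.2⟩
  rw [hmot.2.2 t ⟨hgt.le, ht.2⟩, hx0, hhistory tstar le_rfl, hrecent, add_assoc, ← smul_add,
    intervalIntegral.integral_add_adjacent_intervals
      (intervalIntegrable_sub_rpow_smul hα hg hB t ht0 hts)
      (intervalIntegrable_sub_rpow_smul hα hg hB t hts ht), RL]

end Motion

theorem motion_uniform_bounds_general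
    (t0 ϑ : ℝ) (hT : t0 < ϑ) (n : ℕ) (α : ℝ) (hα : α ∈ Set.Ioo (0 : ℝ) 1)
    (r s : ℕ)
    (U : Set (Evec r)) (V : Set (Evec s)) (hUc : IsCompact U)
    (hVc : IsCompact V)
    (f : ℝ → Evec n → Evec r → Evec s → Evec n)
    (hA1 : CondA1 t0 ϑ U V f)
    (c : ℝ) (hc : 0 < c) (hA3 : CondA3 t0 ϑ U V f c)
    (R0 : ℝ) (hR0 : 0 < R0) :
    ∃ R1 > (0 : ℝ), ∃ H1 > (0 : ℝ),
      ∀ (tstar : ℝ) (wstar φstar : ℝ → Evec n),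
        IsAdmissible t0 ϑ α c R0 tstar wstar φstar →
        ∀ (u : ℝ → Evec r) (v : ℝ → Evec s),
          IsControl tstar ϑ U u → IsControl tstar ϑ V v →
          ∀ x, IsMotion t0 ϑ α f tstar wstar φstar u v x →
            ∀ t ∈ Icc t0 ϑ, ‖x t‖ ≤ R1 ∧
              ∀ t' ∈ Icc t0 ϑ, ‖x t - x t'‖ ≤ H1 * |t - t'| ^ α := by
  obtain ⟨hα0, hα1⟩ := hα
  have hΓ := Real.Gamma_pos_of_pos hα0
  obtain ⟨R1, hR1, hvolterra⟩ :=
    exists_bound_of_fractional_volterra hα0 (div_pos hc hΓ) hR0.le hT.le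
  refine ⟨R1, hR1, 2 * ((1 + R1) * c) / (α * Real.Gamma α), by positivity, ?_⟩
  intro tstar wstar φstar hadm u v hu hv x hmot
  have hg := aestronglyMeasurable_motionCaputoDeriv hA1 hUc.isClosed hVc.isClosed
    hadm.2.2.2.1 hu hv hmot.1
  have hgx := ae_norm_motionCaputoDeriv_le hA3 hadm hu hv hmot
  have hgB : ∀ B, (∀ τ ∈ Icc t0 ϑ, ‖x τ‖ ≤ B) → ∀ᵐ τ ∂(volume.restrict (Icc t0 ϑ)),
      ‖motionCaputoDeriv f tstar φstar u v x τ‖ ≤ (1 + B) * c := fun B hB => by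
    filter_upwards [hgx, ae_restrict_mem measurableSet_Icc] with τ hτ hmem
    exact hτ.trans (by gcongr; exact hB τ hmem)
  -- A crude bound on `‖x‖` makes the integrals finite before the uniform bound `R1` is known.
  obtain ⟨M, hM⟩ := isCompact_Icc.exists_bound_of_continuousOn hmot.1
  have hrep : ∀ t ∈ Icc t0 ϑ, _ := fun t ht => hmot.eq_add_RL hadm hα0 hg (hgB M hM) ht
  have hx0 : ‖x t0‖ ≤ R0 := hmot.2.1 t0 ⟨le_rfl, hadm.1.1⟩ ▸ hadm.2.2.1
  have hbound : ∀ t ∈ Icc t0 ϑ, ‖x t‖ ≤ R1 :=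
    hvolterra _ (continuous_norm.comp_continuousOn hmot.1) (fun _ _ => norm_nonneg _)
      fun t ht => norm_le_fractional_volterra hα0 ht.1 (hmot.1.mono (Icc_subset_Icc_right ht.2))
        (hrep t ht) hx0 (ae_restrict_of_ae_restrict_of_subset (Icc_subset_Icc_right ht.2) hgx)
  intro t ht
  refine ⟨hbound t ht, fun t' ht' => ?_⟩
  rw [hrep t ht, hrep t' ht', add_sub_add_left_eq_sub]
  exact norm_RL_sub_RL_le hα0 hα1.le hg (by positivity) (hgB R1 hbound) ht ht'

/-- Corollary 1: under (A.1)–(A.3), there exist constants `R1, H1 > 0`,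
depending only on `α, t0, ϑ, R0, c`, such that every motion `x` satisfies `‖x(t)‖ ≤ R1`
and `‖x(t) - x(t')‖ ≤ H1 |t - t'|^α` for all `t, t' ∈ [t0, ϑ]`. -/
theorem motion_uniform_bounds
    (t0 ϑ : ℝ) (hT : t0 < ϑ) (n : ℕ) (hn : 1 ≤ n) (α : ℝ) (hα : α ∈ Set.Ioo (0 : ℝ) 1)
    (r s : ℕ) (hr : 1 ≤ r) (hs : 1 ≤ s)
    (U : Set (Evec r)) (V : Set (Evec s)) (hUc : IsCompact U) (hUne : U.Nonempty)
    (hVc : IsCompact V) (hVne : V.Nonempty)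
    (f : ℝ → Evec n → Evec r → Evec s → Evec n)
    (hA1 : CondA1 t0 ϑ U V f) (hA2 : CondA2 t0 ϑ U V f)
    (c : ℝ) (hc : 0 < c) (hA3 : CondA3 t0 ϑ U V f c)
    (R0 : ℝ) (hR0 : 0 < R0) :
    ∃ R1 > (0 : ℝ), ∃ H1 > (0 : ℝ),
      ∀ (tstar : ℝ) (wstar φstar : ℝ → Evec n),
        IsAdmissible t0 ϑ α c R0 tstar wstar φstar →
        ∀ (u : ℝ → Evec r) (v : ℝ → Evec s),
          IsControl tstar ϑ U u → IsControl tstar ϑ V v →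
          ∀ x, IsMotion t0 ϑ α f tstar wstar φstar u v x →
            ∀ t ∈ Icc t0 ϑ, ‖x t‖ ≤ R1 ∧
              ∀ t' ∈ Icc t0 ϑ, ‖x t - x t'‖ ≤ H1 * |t - t'| ^ α :=
  motion_uniform_bounds_general t0 ϑ hT n α hα r s U V hUc hVc f hA1 c hc hA3 R0 hR0
end
end
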